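/- For the case k=1, the identity (q;q)_∞ · ∑_{i=0}^∞ q^i/(q;q)_i² = ∑_{i=0}^∞ q^{i+i²}/((q;q)_i)² holds for |q|<1. -/

import Mathlib

/-!
Write `(q)_n` for `qPoch q n`. The finite Durfee-rectangle identity
`∑_{n ≤ N} q^(n²+kn) / ((q)_n (q)_{N-n} (q)_{n+k}) = 1 / ((q)_N (q)_{N+k})`
follows by induction on `N`, for all `k` at once, from splitting
`1 - q^(N+1) = (1 - q^(N+1-n)) + q^(N+1-n) (1 - q^n)` termwise. Its case `k = 0` shows that
`F_N = ∑_{n ≤ N} q^(n²+n) / ((q)_n² (q)_{N-n})` grows by `q^(N+1) / (q)_{N+1}²` from `N` to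
`N + 1`, so `F_N` is the `N`-th partial sum of `∑ q^i / (q)_i²`. As `N → ∞`,
`(q)_{N-n} → (q;q)_∞` for each fixed `n`, and all `(q)_m` are bounded below by
`(|q|;|q|)_∞ > 0`, so Tannery's theorem gives `F_N → (q;q)_∞⁻¹ ∑ q^(n²+n) / (q)_n²`.
-/

noncomputable def qPoch (q : ℝ) (n : ℕ) : ℝ := ∏ j ∈ Finset.range n, (1 - q ^ (j + 1))

open Filter Topology Finset

section Algebra

variable {q : ℝ}

lemma qPoch_succ (n : ℕ) : qPoch q (n + 1) = qPoch q n * (1 - q ^ (n + 1)) :=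
  prod_range_succ _ n

lemma one_sub_pow_succ_ne_zero (hq : ∀ n, qPoch q n ≠ 0) (n : ℕ) : 1 - q ^ (n + 1) ≠ 0 :=
  right_ne_zero_of_mul (qPoch_succ (q := q) n ▸ hq (n + 1))

noncomputable def durfeeTerm (q : ℝ) (k N n : ℕ) : ℝ :=
  q ^ (n ^ 2 + k * n) / (qPoch q n * qPoch q (N - n) * qPoch q (n + k))

noncomputable def durfeeSum (q : ℝ) (k N : ℕ) : ℝ :=
  ∑ n ∈ range (N + 1), durfeeTerm q k N n

variable (hq : ∀ n, qPoch q n ≠ 0)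
include hq

lemma one_sub_pow_mul_durfeeTerm_succ {k N n : ℕ} (hn : n ≤ N) :
    (1 - q ^ (N + 1 - n)) * durfeeTerm q k (N + 1) n = durfeeTerm q k N n := by
  have hN : N + 1 - n = N - n + 1 := by omega
  rw [durfeeTerm, durfeeTerm, hN, qPoch_succ]
  have := hq n; have := hq (N - n); have := hq (n + k)
  have := one_sub_pow_succ_ne_zero hq (N - n)
  field_simp

lemma pow_mul_one_sub_pow_mul_durfeeTerm_succ {k N n : ℕ} (hn : n ≤ N) :
    q ^ (N - n) * (1 - q ^ (n + 1)) * durfeeTerm q k (N + 1) (n + 1)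
      = q ^ (N + 1 + k) * durfeeTerm q (k + 1) N n := by
  have hN : N + 1 - (n + 1) = N - n := by omega
  have hk : n + (k + 1) = n + 1 + k := by omega
  have hexp : q ^ (N - n) * q ^ ((n + 1) ^ 2 + k * (n + 1))
      = q ^ (N + 1 + k) * q ^ (n ^ 2 + (k + 1) * n) := by
    rw [← pow_add, ← pow_add]; congr 1
    zify [hn]; ring
  rw [durfeeTerm, durfeeTerm, hN, hk, qPoch_succ]
  have := hq n; have := hq (N - n); have := hq (n + 1 + k)
  have := one_sub_pow_succ_ne_zero hq n
  field_simp
  linear_combination hexp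

lemma one_sub_pow_mul_durfeeSum_succ (k N : ℕ) :
    (1 - q ^ (N + 1)) * durfeeSum q k (N + 1)
      = durfeeSum q k N + q ^ (N + 1 + k) * durfeeSum q (k + 1) N := by
  have hsplit : ∀ n ∈ range (N + 2), (1 - q ^ (N + 1)) * durfeeTerm q k (N + 1) n
      = (1 - q ^ (N + 1 - n)) * durfeeTerm q k (N + 1) n
        + q ^ (N + 1 - n) * (1 - q ^ n) * durfeeTerm q k (N + 1) n := by
    intro n hn
    have hpow : q ^ (N + 1 - n) * q ^ n = q ^ (N + 1) := by
      rw [← pow_add, Nat.sub_add_cancel (Nat.lt_succ_iff.mp (mem_range.mp hn))]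
    linear_combination durfeeTerm q k (N + 1) n * hpow
  rw [durfeeSum, mul_sum, sum_congr rfl hsplit, sum_add_distrib, sum_range_succ,
    sum_range_succ' (fun n => q ^ (N + 1 - n) * (1 - q ^ n) * durfeeTerm q k (N + 1) n),
    durfeeSum, durfeeSum, mul_sum]
  simp only [Nat.sub_self, pow_zero, sub_self, zero_mul, mul_zero, add_zero]
  congr 1 <;> refine sum_congr rfl fun n hn => ?_
  · exact one_sub_pow_mul_durfeeTerm_succ hq (Nat.lt_succ_iff.mp (mem_range.mp hn))
  · rw [show N + 1 - (n + 1) = N - n by omega]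
    exact pow_mul_one_sub_pow_mul_durfeeTerm_succ hq (Nat.lt_succ_iff.mp (mem_range.mp hn))

lemma durfeeSum_eq (N k : ℕ) : durfeeSum q k N = (qPoch q N * qPoch q (N + k))⁻¹ := by
  induction N generalizing k with
  | zero => simp [durfeeSum, durfeeTerm, qPoch]
  | succ N ih =>
    have hrec := one_sub_pow_mul_durfeeSum_succ hq k N
    rw [ih, ih, ← add_assoc, qPoch_succ (N + k)] at hrec
    rw [add_right_comm, qPoch_succ, qPoch_succ]
    have := hq N; have := hq (N + k)
    have := one_sub_pow_succ_ne_zero hq N; have := one_sub_pow_succ_ne_zero hq (N + k)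
    field_simp at hrec ⊢
    linear_combination hrec

lemma sum_pow_mul_durfeeTerm_zero (N : ℕ) :
    ∑ n ∈ range (N + 1), q ^ n * durfeeTerm q 0 N n
      = ∑ n ∈ range (N + 1), q ^ n / qPoch q n ^ 2 := by
  induction N with
  | zero => simp [durfeeTerm, qPoch]
  | succ N ih =>
    have hJ : q ^ (N + 1) / qPoch q (N + 1) ^ 2
        = ∑ n ∈ range (N + 2), q ^ (N + 1) * durfeeTerm q 0 (N + 1) n := by
      rw [← mul_sum, ← durfeeSum, durfeeSum_eq hq, add_zero, div_eq_mul_inv, sq]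
    have hstep : ∀ n ∈ range (N + 1), q ^ n * durfeeTerm q 0 (N + 1) n
        - q ^ (N + 1) * durfeeTerm q 0 (N + 1) n = q ^ n * durfeeTerm q 0 N n := by
      intro n hn
      have hnN := Nat.lt_succ_iff.mp (mem_range.mp hn)
      have hpow : q ^ n * q ^ (N + 1 - n) = q ^ (N + 1) := by
        rw [← pow_add, Nat.add_sub_cancel' (by omega)]
      rw [← one_sub_pow_mul_durfeeTerm_succ hq hnN]
      linear_combination durfeeTerm q 0 (N + 1) n * hpow
    rw [sum_range_succ (fun n => q ^ n / qPoch q n ^ 2) (N + 1), ← ih, hJ, ← sub_eq_iff_eq_add,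
      ← sum_sub_distrib, sum_range_succ _ (N + 1), sub_self, add_zero]
    exact sum_congr rfl hstep

end Algebra

section Analysis

variable {q : ℝ}

lemma one_sub_pow_succ_pos (hq : |q| < 1) (n : ℕ) : 0 < 1 - q ^ (n + 1) :=
  sub_pos.2 <| (le_abs_self _).trans_lt <| by
    rw [abs_pow]; exact pow_lt_one₀ (abs_nonneg q) hq n.succ_ne_zero

lemma qPoch_pos (hq : |q| < 1) (n : ℕ) : 0 < qPoch q n :=
  prod_pos fun j _ => one_sub_pow_succ_pos hq j

lemma hasProd_one_sub_pow (hq : |q| < 1) :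
    HasProd (fun j : ℕ => 1 - q ^ (j + 1))
      (Real.exp (∑' j : ℕ, Real.log (1 - q ^ (j + 1)))) := by
  have hs : Summable fun j : ℕ => -q ^ (j + 1) := by
    simpa only [pow_succ'] using ((summable_geometric_of_abs_lt_one hq).mul_left q).neg
  refine Real.hasProd_of_hasSum_log (one_sub_pow_succ_pos hq) ?_
  simpa only [sub_eq_add_neg] using (Real.summable_log_one_add_of_summable hs).hasSum

lemma tprod_one_sub_pow_pos (hq : |q| < 1) : 0 < ∏' j : ℕ, (1 - q ^ (j + 1)) :=
  (hasProd_one_sub_pow hq).tprod_eq ▸ Real.exp_pos _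

lemma tendsto_qPoch (hq : |q| < 1) :
    Tendsto (qPoch q) atTop (𝓝 (∏' j : ℕ, (1 - q ^ (j + 1)))) :=
  (hasProd_one_sub_pow hq).multipliable.hasProd.tendsto_prod_nat

lemma qPoch_abs_le (hq : |q| ≤ 1) (n : ℕ) : qPoch |q| n ≤ qPoch q n :=
  prod_le_prod (fun _ _ => sub_nonneg.2 (pow_le_one₀ (abs_nonneg q) hq))
    fun j _ => sub_le_sub_left ((abs_pow q (j + 1)).symm ▸ le_abs_self _) 1

lemma antitone_qPoch (h0 : 0 ≤ q) (h1 : q ≤ 1) : Antitone (qPoch q) :=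
  antitone_nat_of_succ_le fun n => by
    rw [qPoch_succ]
    exact mul_le_of_le_one_right (prod_nonneg fun _ _ => sub_nonneg.2 (pow_le_one₀ h0 h1))
      (sub_le_self 1 (pow_nonneg h0 _))

lemma exists_pos_forall_le_qPoch (hq : |q| < 1) : ∃ c, 0 < c ∧ ∀ m, c ≤ qPoch q m := by
  have hq' : |(|q|)| < 1 := by rwa [abs_abs]
  exact ⟨_, tprod_one_sub_pow_pos hq', fun m =>
    ((antitone_qPoch (abs_nonneg q) hq.le).le_of_tendsto (tendsto_qPoch hq') m).trans
      (qPoch_abs_le hq.le m)⟩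

section LowerBound

variable {c : ℝ} (hc : 0 < c) (hcq : ∀ m, c ≤ qPoch q m)
include hc hcq

lemma abs_pow_div_qPoch_sq_le (n : ℕ) : |q ^ n / qPoch q n ^ 2| ≤ |q| ^ n * (c ^ 2)⁻¹ := by
  rw [abs_div, abs_pow, abs_pow, abs_of_pos (hc.trans_le (hcq n)), div_eq_mul_inv]
  gcongr
  exact hcq n

lemma abs_durfeeTerm_le (hq : |q| ≤ 1) (k N n : ℕ) : |durfeeTerm q k N n| ≤ (c ^ 3)⁻¹ := by
  have hpos : ∀ m, 0 ≤ qPoch q m := fun m => hc.le.trans (hcq m)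
  have hden : c ^ 3 ≤ qPoch q n * qPoch q (N - n) * qPoch q (n + k) := by
    rw [pow_three, ← mul_assoc]
    exact mul_le_mul (mul_le_mul (hcq n) (hcq _) hc.le (hpos n)) (hcq _) hc.le
      (mul_nonneg (hpos n) (hpos _))
  rw [durfeeTerm, abs_div, abs_pow, abs_of_pos ((pow_pos hc 3).trans_le hden), ← one_div]
  exact div_le_div₀ zero_le_one (pow_le_one₀ (abs_nonneg q) hq) (pow_pos hc 3) hden

end LowerBound

lemma summable_pow_div_qPoch_sq (hq : |q| < 1) :
    Summable fun n : ℕ => q ^ n / qPoch q n ^ 2 := by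
  obtain ⟨c, hc, hcq⟩ := exists_pos_forall_le_qPoch hq
  exact .of_norm_bounded ((summable_geometric_of_abs_lt_one (by rwa [abs_abs])).mul_right _)
    (abs_pow_div_qPoch_sq_le hc hcq)

lemma tendsto_durfeeTerm (hq : |q| < 1) (k n : ℕ) :
    Tendsto (fun N => durfeeTerm q k N n) atTop
      (𝓝 (q ^ (n ^ 2 + k * n) /
        (qPoch q n * (∏' j : ℕ, (1 - q ^ (j + 1))) * qPoch q (n + k)))) :=
  tendsto_const_nhds.div
    ((tendsto_const_nhds.mul ((tendsto_qPoch hq).comp (tendsto_sub_atTop_nat n))).mul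
      tendsto_const_nhds)
    (mul_pos (mul_pos (qPoch_pos hq n) (tprod_one_sub_pow_pos hq)) (qPoch_pos hq _)).ne'

lemma tendsto_sum_pow_mul_durfeeTerm_zero (hq : |q| < 1) :
    Tendsto (fun N => ∑ n ∈ range (N + 1), q ^ n * durfeeTerm q 0 N n) atTop
      (𝓝 ((∑' n : ℕ, q ^ (n + n ^ 2) / qPoch q n ^ 2) /
        ∏' j : ℕ, (1 - q ^ (j + 1)))) := by
  obtain ⟨c, hc, hcq⟩ := exists_pos_forall_le_qPoch hq
  rw [← tsum_div_const]
  refine Tendsto.congr (fun N => (sum_eq_tsum_indicator _ _).symm) <|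
    tendsto_tsum_of_dominated_convergence (bound := fun n => |q| ^ n * (c ^ 3)⁻¹)
      ((summable_geometric_of_abs_lt_one (by rwa [abs_abs])).mul_right _) (fun n => ?_)
      (Eventually.of_forall fun N n => ?_)
  · have hlimit : q ^ (n + n ^ 2) / qPoch q n ^ 2 / ∏' j : ℕ, (1 - q ^ (j + 1))
        = q ^ n * (q ^ (n ^ 2 + 0 * n) /
          (qPoch q n * (∏' j : ℕ, (1 - q ^ (j + 1))) * qPoch q (n + 0))) := by
      rw [zero_mul, add_zero, add_zero, pow_add]
      ring
    rw [hlimit]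
    refine ((tendsto_durfeeTerm hq 0 n).const_mul (q ^ n)).congr' ?_
    filter_upwards [eventually_ge_atTop n] with N hN
    rw [Set.indicator_of_mem (by simpa [Nat.lt_succ_iff] using hN)]
  · refine (norm_indicator_le_norm_self _ n).trans ?_
    rw [norm_mul, norm_pow, Real.norm_eq_abs]
    exact mul_le_mul_of_nonneg_left (abs_durfeeTerm_le hc hcq hq.le 0 N n) (by positivity)

end Analysis

theorem pretzel_identity_k_one (q : ℝ) (hq : |q| < 1) :
    (∏' j : ℕ, (1 - q ^ (j + 1))) * ∑' i : ℕ, q ^ i / (qPoch q i) ^ 2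
      = ∑' i : ℕ, q ^ (i + i ^ 2) / (qPoch q i) ^ 2 := by
  have hP : 0 < ∏' j : ℕ, (1 - q ^ (j + 1)) := tprod_one_sub_pow_pos hq
  have hpartial := (summable_pow_div_qPoch_sq hq).hasSum.tendsto_sum_nat.comp
    (tendsto_add_atTop_nat 1)
  have hfinite : Tendsto (fun N => ∑ n ∈ range (N + 1), q ^ n / qPoch q n ^ 2) atTop
      (𝓝 ((∑' n : ℕ, q ^ (n + n ^ 2) / qPoch q n ^ 2) /
        ∏' j : ℕ, (1 - q ^ (j + 1)))) := by
    simpa only [sum_pow_mul_durfeeTerm_zero fun n => (qPoch_pos hq n).ne'] using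
      tendsto_sum_pow_mul_durfeeTerm_zero hq
  rw [tendsto_nhds_unique hpartial hfinite, mul_div_cancel₀ _ hP.ne']
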